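/- arXiv:2006.14972 — 8 statements merged into one kernel-verified Lean document; each statement's English description precedes it below -/
import Mathlib

section
/- A graph G is a 2-club cluster graph (i.e., every connected component of G has diameter at most 2) if and only if G contains no restricted P4, where a restricted P4 is a path s-t-u-v on four distinct vertices such that the distance between s and v in G equals 3. -/
open SimpleGraph

/-- A 2-club cluster graph: every connected component has diameter at most 2. -/
def IsTwoClubCluster {V : Type*} (G : SimpleGraph V) : Prop :=
  ∀ x y : V, G.Reachable x y → G.dist x y ≤ 2

/-- A 2-club: a graph of diameter at most 2, i.e. every two distinct vertices are
adjacent or have a common neighbor. -/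
def IsTwoClub {V : Type*} (G : SimpleGraph V) : Prop :=
  ∀ x y : V, x ≠ y → G.Adj x y ∨ ∃ z, G.Adj x z ∧ G.Adj y z

/-- A restricted P4: a path s-t-u-v on four distinct vertices with dist(s,v) = 3. -/
def IsRestrictedP4 {V : Type*} (G : SimpleGraph V) (s t u v : V) : Prop :=
  s ≠ t ∧ s ≠ u ∧ s ≠ v ∧ t ≠ u ∧ t ≠ v ∧ u ≠ v ∧
  G.Adj s t ∧ G.Adj t u ∧ G.Adj u v ∧ G.dist s v = 3

section RestrictedP4

variable {V : Type*} {G : SimpleGraph V} {s t u v : V}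

/-- The distance condition alone forces the four vertices to be distinct. -/
lemma isRestrictedP4_of_dist_eq_three (hst : G.Adj s t) (htu : G.Adj t u) (huv : G.Adj u v)
    (hd : G.dist s v = 3) : IsRestrictedP4 G s t u v := by
  refine ⟨hst.ne, ?_, ?_, htu.ne, ?_, huv.ne, hst, htu, huv, hd⟩
  · rintro rfl
    simp [dist_eq_one_iff_adj.mpr huv] at hd
  · rintro rfl
    simp at hd
  · rintro rfl
    simp [dist_eq_one_iff_adj.mpr hst] at hd

lemma IsRestrictedP4.not_isTwoClubCluster (h : IsRestrictedP4 G s t u v) :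
    ¬ IsTwoClubCluster G := by
  obtain ⟨-, -, -, -, -, -, hst, htu, huv, hd⟩ := h
  intro hG
  have := hG s v (hst.reachable.trans (htu.reachable.trans huv.reachable))
  omega

/-- The first three edges of a shortest walk from `x` to `y` form a restricted P4. -/
lemma SimpleGraph.Reachable.exists_isRestrictedP4_of_three_le_dist {x y : V}
    (hxy : G.Reachable x y) (h3 : 3 ≤ G.dist x y) : ∃ t u v, IsRestrictedP4 G x t u v := by
  obtain ⟨p, hp⟩ := hxy.exists_walk_length_eq_dist
  rcases p with _ | ⟨hxt, _ | ⟨htu, _ | ⟨huv, q⟩⟩⟩ <;>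
    simp only [Walk.length_cons, Walk.length_nil] at hp <;> try omega
  refine ⟨_, _, _, isRestrictedP4_of_dist_eq_three hxt htu huv (le_antisymm ?_ ?_)⟩
  · simpa using G.dist_le (.cons hxt (.cons htu (.cons huv .nil)))
  · have hdetour := q.reachable.dist_triangle_right x
    have hq := G.dist_le q
    omega

end RestrictedP4

theorem stmt0_general {V : Type*} (G : SimpleGraph V) :
    IsTwoClubCluster G ↔ ¬ ∃ s t u v : V, IsRestrictedP4 G s t u v := by
  constructor
  · rintro hG ⟨s, t, u, v, hP⟩
    exact hP.not_isTwoClubCluster hG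
  · intro hP x y hxy
    by_contra! h3
    obtain ⟨t, u, v, hP'⟩ := hxy.exists_isRestrictedP4_of_three_le_dist h3
    exact hP ⟨x, t, u, v, hP'⟩

theorem stmt0 {V : Type*} [Fintype V] (G : SimpleGraph V) :
    IsTwoClubCluster G ↔ ¬ ∃ s t u v : V, IsRestrictedP4 G s t u v :=
  stmt0_general G
end

section
/- If a graph G is a 2-club and contains two vertices u and v that are twins (that is, N[u]=N[v] or N(u)=N(v)), then the graph obtained by deleting v from G is still a 2-club. -/
open SimpleGraph

theorem SimpleGraph.Adj.eq_or_adj_of_twin {V : Type*} {G : SimpleGraph V} {u v w : V}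
    (htwin : (({u} : Set V) ∪ G.neighborSet u = ({v} : Set V) ∪ G.neighborSet v) ∨
      G.neighborSet u = G.neighborSet v)
    (hvw : G.Adj v w) : w = u ∨ G.Adj u w := by
  rcases htwin with hclosed | hopen
  · have hw : w ∈ ({v} : Set V) ∪ G.neighborSet v := Or.inr hvw
    rwa [← hclosed] at hw
  · exact Or.inr (hopen ▸ hvw : w ∈ G.neighborSet u)

theorem stmt1_general {V : Type*} (G : SimpleGraph V) (u v : V) (huv : u ≠ v)
    (htwin : (({u} : Set V) ∪ G.neighborSet u = ({v} : Set V) ∪ G.neighborSet v) ∨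
      G.neighborSet u = G.neighborSet v)
    (h2 : IsTwoClub G) :
    IsTwoClub (G.induce {x : V | x ≠ v}) := by
  intro x y hxy
  rcases h2 x y (Subtype.coe_injective.ne hxy) with hadj | ⟨z, hxz, hyz⟩
  · exact .inl hadj
  by_cases hzv : z = v
  · subst hzv
    -- The common neighbour `v` is replaced by its twin `u`, unless `u` is `x` or `y` itself.
    rcases hxz.symm.eq_or_adj_of_twin htwin, hyz.symm.eq_or_adj_of_twin htwin with
      ⟨hxu | hux, hyu | huy⟩
    · exact absurd (Subtype.ext (hxu.trans hyu.symm)) hxy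
    · exact .inl (show G.Adj x y from hxu ▸ huy)
    · exact .inl (show G.Adj x y from hyu ▸ hux.symm)
    · exact .inr ⟨⟨u, huv⟩, hux.symm, huy.symm⟩
  · exact .inr ⟨⟨z, hzv⟩, hxz, hyz⟩

theorem stmt1 {V : Type*} [Fintype V] (G : SimpleGraph V) (u v : V) (huv : u ≠ v)
    (htwin : (({u} : Set V) ∪ G.neighborSet u = ({v} : Set V) ∪ G.neighborSet v) ∨
      G.neighborSet u = G.neighborSet v)
    (h2 : IsTwoClub G) :
    IsTwoClub (G.induce {x : V | x ≠ v}) :=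
  stmt1_general G u v huv htwin h2
end

section
/- Let G=(V,E) be a graph, w: V → ℕ⁺ a weight function, and P a set of restricted P4's in G such that each vertex v ∈ V is contained in at most w(v) many paths of P. Then any 2-club vertex deletion set S of G (a set of vertices whose deletion leaves a 2-club cluster graph) satisfies w(S) ≥ |P|, where w(S) is the sum of the weights of vertices in S. -/
/-!
If a restricted P4 `s-t-u-v` survived in `G - S`, its endpoints would lie in one component
of `G - S` at distance at least `dist_G(s, v) = 3` there, as distances can only grow in an
induced subgraph. So every path of `P` meets `S`; charging each path to one of its vertices
in `S` counts it at most `w x` times at each `x ∈ S`.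
-/

open SimpleGraph

theorem SimpleGraph.Reachable.dist_map_le {V W : Type*} {G : SimpleGraph V} {H : SimpleGraph W}
    (f : G →g H) {u v : V} (huv : G.Reachable u v) : H.dist (f u) (f v) ≤ G.dist u v := by
  obtain ⟨q, hq⟩ := huv.exists_walk_length_eq_dist
  calc H.dist (f u) (f v) ≤ (q.map f).length := dist_le _
    _ = G.dist u v := by rw [Walk.length_map, hq]

theorem IsRestrictedP4.mem_or_mem_or_mem_or_mem {V : Type*} {G : SimpleGraph V} {s t u v : V}
    (hP4 : IsRestrictedP4 G s t u v) {S : Set V} (hS : IsTwoClubCluster (G.induce Sᶜ)) :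
    s ∈ S ∨ t ∈ S ∨ u ∈ S ∨ v ∈ S := by
  obtain ⟨-, -, -, -, -, -, hst, htu, huv, hsv⟩ := hP4
  by_contra! hout
  obtain ⟨hs, ht, hu, hv⟩ := hout
  have hst' : (G.induce Sᶜ).Adj ⟨s, hs⟩ ⟨t, ht⟩ := hst
  have htu' : (G.induce Sᶜ).Adj ⟨t, ht⟩ ⟨u, hu⟩ := htu
  have huv' : (G.induce Sᶜ).Adj ⟨u, hu⟩ ⟨v, hv⟩ := huv
  have hreach := (hst'.reachable.trans htu'.reachable).trans huv'.reachable
  have hsv_le : G.dist s v ≤ 2 :=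
    (hreach.dist_map_le (Embedding.induce Sᶜ).toHom).trans (hS _ _ hreach)
  omega

theorem Finset.card_le_sum_card_filter_of_forall_exists {α β : Type*} [DecidableEq β]
    {P : Finset β} {S : Finset α} (r : α → β → Prop) [∀ x, DecidablePred (r x)]
    (hcover : ∀ p ∈ P, ∃ x ∈ S, r x p) : P.card ≤ ∑ x ∈ S, (P.filter (r x)).card :=
  calc P.card ≤ (S.biUnion fun x => P.filter (r x)).card := card_le_card fun p hp => by
        obtain ⟨x, hx, hxp⟩ := hcover p hp
        exact mem_biUnion.2 ⟨x, hx, mem_filter.2 ⟨hp, hxp⟩⟩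
    _ ≤ ∑ x ∈ S, (P.filter (r x)).card := card_biUnion_le

theorem stmt4_general {V : Type*} [DecidableEq V] (G : SimpleGraph V)
    (w : V → ℕ)
    (P : Finset (V × V × V × V))
    (hP : ∀ p ∈ P, IsRestrictedP4 G p.1 p.2.1 p.2.2.1 p.2.2.2)
    (hcnt : ∀ x : V,
      (P.filter (fun p => x = p.1 ∨ x = p.2.1 ∨ x = p.2.2.1 ∨ x = p.2.2.2)).card ≤ w x)
    (S : Finset V) (hS : IsTwoClubCluster (G.induce ((↑S : Set V)ᶜ))) :
    P.card ≤ ∑ x ∈ S, w x := by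
  have hhit : ∀ p ∈ P, ∃ x ∈ S, x = p.1 ∨ x = p.2.1 ∨ x = p.2.2.1 ∨ x = p.2.2.2 := by
    intro p hp
    rcases (hP p hp).mem_or_mem_or_mem_or_mem hS with h | h | h | h
    exacts [⟨_, h, Or.inl rfl⟩, ⟨_, h, Or.inr (Or.inl rfl)⟩,
      ⟨_, h, Or.inr (Or.inr (Or.inl rfl))⟩, ⟨_, h, Or.inr (Or.inr (Or.inr rfl))⟩]
  calc P.card ≤ ∑ x ∈ S, (P.filter _).card :=
        Finset.card_le_sum_card_filter_of_forall_exists _ hhit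
    _ ≤ ∑ x ∈ S, w x := Finset.sum_le_sum fun x _ => hcnt x

theorem stmt4 {V : Type*} [Fintype V] [DecidableEq V] (G : SimpleGraph V)
    (w : V → ℕ) (hw : ∀ x, 1 ≤ w x)
    (P : Finset (V × V × V × V))
    (hP : ∀ p ∈ P, IsRestrictedP4 G p.1 p.2.1 p.2.2.1 p.2.2.2)
    (hcnt : ∀ x : V,
      (P.filter (fun p => x = p.1 ∨ x = p.2.1 ∨ x = p.2.2.1 ∨ x = p.2.2.2)).card ≤ w x)
    (S : Finset V) (hS : IsTwoClubCluster (G.induce ((↑S : Set V)ᶜ))) :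
    P.card ≤ ∑ x ∈ S, w x :=
  stmt4_general G w P hP hcnt S hS
end

section
/- Let G be a connected graph with positive vertex weights w, let C be a maximum-weight vertex set inducing a 2-club in G, and let D be a minimum-weight vertex cut set of G. Then every 2-club vertex deletion set S of G satisfies w(S) ≥ min(w(V∖C), w(D)). -/
open SimpleGraph

/-- A vertex cut set: removing it disconnects the graph. -/
def IsCutSet {V : Type*} (G : SimpleGraph V) (D : Set V) : Prop :=
  ¬ (G.induce Dᶜ).Preconnected

theorem IsTwoClubCluster.isTwoClub {V : Type*} {G : SimpleGraph V} (h : IsTwoClubCluster G)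
    (hconn : G.Preconnected) : IsTwoClub G := by
  intro x y hxy
  obtain ⟨p, hp⟩ := (hconn x y).exists_walk_length_eq_dist
  have hlen : p.length ≤ 2 := hp ▸ h x y (hconn x y)
  match p with
  | .nil => exact absurd rfl hxy
  | .cons hxy' .nil => exact Or.inl hxy'
  | .cons hxz (.cons hzy .nil) => exact Or.inr ⟨_, hxz, hzy.symm⟩
  | .cons _ (.cons _ (.cons _ _)) => simp at hlen

theorem stmt5_general {V : Type*} [Fintype V] [DecidableEq V] (G : SimpleGraph V)
    (w : V → ℕ)
    (C : Finset V)
    (hCmax : ∀ C' : Finset V, IsTwoClub (G.induce (↑C' : Set V)) →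
      ∑ x ∈ C', w x ≤ ∑ x ∈ C, w x)
    (D : Finset V)
    (hDmin : ∀ D' : Finset V, IsCutSet G ↑D' → ∑ x ∈ D, w x ≤ ∑ x ∈ D', w x)
    (S : Finset V) (hS : IsTwoClubCluster (G.induce ((↑S : Set V)ᶜ))) :
    min (∑ x ∈ Cᶜ, w x) (∑ x ∈ D, w x) ≤ ∑ x ∈ S, w x := by
  by_cases hconn : (G.induce ((↑S : Set V)ᶜ)).Preconnected
  · have hclub : IsTwoClub (G.induce (↑Sᶜ : Set V)) := by
      rw [Finset.coe_compl]
      exact hS.isTwoClub hconn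
    have hle := hCmax Sᶜ hclub
    have hC_split := Finset.sum_add_sum_compl C w
    have hS_split := Finset.sum_add_sum_compl S w
    exact min_le_of_left_le (by omega)
  · exact min_le_of_right_le (hDmin S hconn)

theorem stmt5 {V : Type*} [Fintype V] [DecidableEq V] (G : SimpleGraph V)
    (hG : G.Connected)
    (w : V → ℕ) (hw : ∀ x, 1 ≤ w x)
    (C : Finset V) (hC : IsTwoClub (G.induce (↑C : Set V)))
    (hCmax : ∀ C' : Finset V, IsTwoClub (G.induce (↑C' : Set V)) →
      ∑ x ∈ C', w x ≤ ∑ x ∈ C, w x)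
    (D : Finset V) (hD : IsCutSet G ↑D)
    (hDmin : ∀ D' : Finset V, IsCutSet G ↑D' → ∑ x ∈ D, w x ≤ ∑ x ∈ D', w x)
    (S : Finset V) (hS : IsTwoClubCluster (G.induce ((↑S : Set V)ᶜ))) :
    min (∑ x ∈ Cᶜ, w x) (∑ x ∈ D, w x) ≤ ∑ x ∈ S, w x :=
  stmt5_general G w C hCmax D hDmin S hS
end

section
/- Let (G,k,w) be an instance of weighted 2-club cluster vertex deletion and let u,v be distinct vertices with N[u]=N[v] or N(u)=N(v). Let G'=G−v and define w' to agree with w except w'(u)=w(u)+w(v). Then G has a 2-club vertex deletion set S with w(S) ≤ k if and only if G' has a 2-club vertex deletion set S' with w'(S') ≤ k. -/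
open SimpleGraph

/-!
For `u ∈ A` and `v ∉ A`, sending `v` to `u` and fixing the rest maps `G[A ∪ {v}]` onto `G[A]`:
edges go to edges or are contracted, and because `u` and `v` are twins, adjacency is also
reflected. So distances of at most two transfer in both directions. The one exception is the
pair `u`, `v` itself, and twins in the same component are always within distance two. Hence
adding or deleting a twin of a surviving vertex preserves being a 2-club cluster. A solution may
therefore be assumed to contain both twins or neither, and such solutions of `G` correspond to
solutions of `G - v` of the same weight once `u` also carries the weight of `v`.
-/

section Distance

variable {V α β : Type*}

def WithinTwo (G : SimpleGraph V) (x y : V) : Prop :=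
  x = y ∨ G.Adj x y ∨ ∃ z, G.Adj x z ∧ G.Adj z y

theorem edist_le_two_iff_withinTwo {G : SimpleGraph V} {x y : V} :
    G.edist x y ≤ 2 ↔ WithinTwo G x y := by
  rw [← not_lt, two_lt_edist_iff, ← Set.not_nonempty_iff_eq_empty]
  simp only [WithinTwo, Set.Nonempty, mem_commonNeighbors, G.adj_comm y]
  grind

theorem isTwoClubCluster_iff {G : SimpleGraph V} :
    IsTwoClubCluster G ↔ ∀ x y, G.Reachable x y → WithinTwo G x y := by
  refine forall₂_congr fun x y => imp_congr_right fun h => ?_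
  rw [← edist_le_two_iff_withinTwo, ← h.coe_dist_eq_edist]
  exact_mod_cast Iff.rfl

def IsWeakHom (H : SimpleGraph α) (K : SimpleGraph β) (f : α → β) : Prop :=
  ∀ a b, H.Adj a b → f a = f b ∨ K.Adj (f a) (f b)

variable {H : SimpleGraph α} {K : SimpleGraph β} {f : α → β}

theorem IsWeakHom.reachable (hf : IsWeakHom H K f) {a b : α} (h : H.Reachable a b) :
    K.Reachable (f a) (f b) := by
  obtain ⟨p⟩ := h
  induction p with
  | nil => rfl
  | cons hadj _ ih =>
    rcases hf _ _ hadj with heq | hK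
    · exact heq ▸ ih
    · exact hK.reachable.trans ih

theorem IsWeakHom.withinTwo (hf : IsWeakHom H K f) {a b : α} (h : WithinTwo H a b) :
    WithinTwo K (f a) (f b) := by
  rcases h with rfl | hab | ⟨z, haz, hzb⟩
  · exact Or.inl rfl
  · exact (hf a b hab).imp_right Or.inl
  · rcases hf a z haz with h₁ | h₁ <;> rcases hf z b hzb with h₂ | h₂
    · exact Or.inl (h₁.trans h₂)
    · exact Or.inr (Or.inl (h₁ ▸ h₂))
    · exact Or.inr (Or.inl (h₂ ▸ h₁))
    · exact Or.inr (Or.inr ⟨f z, h₁, h₂⟩)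

theorem IsTwoClubCluster.of_retract (i : K →g H) (hf : IsWeakHom H K f)
    (hfi : ∀ b, f (i b) = b) (h : IsTwoClubCluster H) : IsTwoClubCluster K := by
  rw [isTwoClubCluster_iff] at h ⊢
  intro x y hxy
  simpa only [hfi] using hf.withinTwo (h _ _ (hxy.map i))

theorem isTwoClubCluster_iff_of_iso (e : H ≃g K) : IsTwoClubCluster H ↔ IsTwoClubCluster K :=
  ⟨.of_retract e.symm.toHom (fun _ _ hab => Or.inr (e.map_adj_iff.2 hab)) e.apply_symm_apply,
    .of_retract e.toHom (fun _ _ hab => Or.inr (e.symm.map_adj_iff.2 hab)) e.symm_apply_apply⟩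

end Distance

section Twins

variable {V : Type*} {G : SimpleGraph V} {u v : V}

/-- True twins (`N[u] = N[v]`) and false twins (`N(u) = N(v)`) at once: whether `u` and `v` are
adjacent is left open. -/
def AreTwins (G : SimpleGraph V) (u v : V) : Prop :=
  ∀ x, x ≠ u → x ≠ v → (G.Adj u x ↔ G.Adj v x)

theorem areTwins_self (G : SimpleGraph V) (u : V) : AreTwins G u u :=
  fun _ _ _ => Iff.rfl

theorem AreTwins.symm (h : AreTwins G u v) : AreTwins G v u :=
  fun x hxv hxu => (h x hxu hxv).symm

theorem areTwins_of_closedNbhd_eq_or_neighborSet_eq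
    (h : ({u} : Set V) ∪ G.neighborSet u = {v} ∪ G.neighborSet v ∨
      G.neighborSet u = G.neighborSet v) : AreTwins G u v := by
  intro x hxu hxv
  rcases h with h | h
  · simpa [hxu, hxv] using Set.ext_iff.mp h x
  · simpa using Set.ext_iff.mp h x

theorem AreTwins.induce {s : Set V} {a b : s} (h : AreTwins G a b) : AreTwins (G.induce s) a b :=
  fun x hxa hxb => h x (Subtype.coe_ne_coe.2 hxa) (Subtype.coe_ne_coe.2 hxb)

theorem AreTwins.withinTwo_of_reachable (h : AreTwins G u v) (hr : G.Reachable u v) :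
    WithinTwo G u v := by
  by_cases huv : u = v
  · exact Or.inl huv
  obtain ⟨p⟩ := hr
  have hc : G.Adj u p.snd := p.adj_snd (Walk.not_nil_of_ne huv)
  by_cases hcv : p.snd = v
  · exact Or.inr (Or.inl (hcv ▸ hc))
  · exact Or.inr (Or.inr ⟨p.snd, hc, ((h _ hc.ne.symm hcv).1 hc).symm⟩)

variable [DecidableEq V]

theorem AreTwins.isWeakHom_update (h : AreTwins G u v) : IsWeakHom G G (Function.update id v u) := by
  intro x y hxy
  simp only [Function.update_apply, id]
  have hx := h x; have hy := h y
  split_ifs <;> grind [G.adj_comm, SimpleGraph.Adj.ne]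

theorem AreTwins.adj_of_adj_update (h : AreTwins G u v) {x y : V}
    (hxy : G.Adj (Function.update id v u x) (Function.update id v u y)) : G.Adj x y := by
  simp only [Function.update_apply, id] at hxy
  have hx := h x; have hy := h y
  split_ifs at hxy <;> grind [G.adj_comm, SimpleGraph.Adj.ne]

theorem AreTwins.areTwins_of_update_eq (h : AreTwins G u v) {x y : V}
    (hxy : Function.update id v u x = Function.update id v u y) : AreTwins G x y := by
  simp only [Function.update_apply, id] at hxy
  split_ifs at hxy with hx hy hy
  · exact hx ▸ hy ▸ areTwins_self G v
  · exact hx ▸ hxy ▸ h.symm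
  · exact hxy ▸ hy ▸ h
  · exact hxy ▸ areTwins_self G x

end Twins

section Insert

variable {V α β : Type*} {H : SimpleGraph α} {K : SimpleGraph β} {f : α → β}

theorem IsTwoClubCluster.of_isWeakHom (hf : IsWeakHom H K f) (hsurj : f.Surjective)
    (hrefl : ∀ a b, K.Adj (f a) (f b) → H.Adj a b) (hfib : ∀ a b, f a = f b → AreTwins H a b)
    (h : IsTwoClubCluster K) : IsTwoClubCluster H := by
  rw [isTwoClubCluster_iff] at h ⊢
  intro x y hxy
  by_cases hfxy : f x = f y
  · exact (hfib x y hfxy).withinTwo_of_reachable hxy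
  rcases h _ _ (hf.reachable hxy) with heq | hadj | ⟨z, hxz, hzy⟩
  · exact absurd heq hfxy
  · exact Or.inr (Or.inl (hrefl x y hadj))
  · obtain ⟨z, rfl⟩ := hsurj z
    exact Or.inr (Or.inr ⟨z, hrefl x z hxz, hrefl z y hzy⟩)

variable [DecidableEq V] {G : SimpleGraph V} {u v : V} {A : Set V}

theorem AreTwins.isTwoClubCluster_induce_insert_iff (htw : AreTwins G u v) (hu : u ∈ A)
    (hv : v ∉ A) : IsTwoClubCluster (G.induce (insert v A)) ↔ IsTwoClubCluster (G.induce A) := by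
  have hmaps : Set.MapsTo (Function.update id v u) (insert v A) A := by
    rintro x (rfl | hx)
    · simpa using hu
    · simpa [ne_of_mem_of_not_mem hx hv] using hx
  let f := hmaps.restrict
  have hf : IsWeakHom (G.induce (insert v A)) (G.induce A) f :=
    fun a b hab => (htw.isWeakHom_update a b hab).imp Subtype.ext id
  let i := (induceHomOfLE G (Set.subset_insert v A)).toHom
  have hfi : ∀ b, f (i b) = b := fun b =>
    Subtype.ext (Function.update_of_ne (ne_of_mem_of_not_mem b.2 hv) _ _)
  refine ⟨.of_retract i hf hfi, .of_isWeakHom hf (fun b => ⟨i b, hfi b⟩)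
    (fun _ _ hab => htw.adj_of_adj_update hab)
    (fun _ _ hab => (htw.areTwins_of_update_eq (congrArg Subtype.val hab)).induce)⟩

end Insert

section Solutions

variable {V : Type*} {G : SimpleGraph V}

theorem isTwoClubCluster_induce_induce_iff (s : Set V) (t : Set s) :
    IsTwoClubCluster ((G.induce s).induce t) ↔ IsTwoClubCluster (G.induce (Subtype.val '' t)) := by
  let emb : (G.induce s).induce t ↪g G := (Embedding.induce t).trans (Embedding.induce s)
  have hrange : Set.range emb = Subtype.val '' t := by
    rw [show ⇑emb = Subtype.val ∘ Subtype.val from rfl, Set.range_comp, Subtype.range_coe]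
  have e := emb.isoInduceRange
  rw [hrange] at e
  exact isTwoClubCluster_iff_of_iso e

theorem exists_finset_subtype_isTwoClubCluster_iff (s : Set V) (c : V → ℕ) (k : ℕ) :
    (∃ S' : Finset s, IsTwoClubCluster ((G.induce s).induce {y | y ∈ S'}ᶜ) ∧
      ∑ x ∈ S', c x ≤ k) ↔
    ∃ R : Finset V, ↑R ⊆ s ∧ IsTwoClubCluster (G.induce (s \ ↑R)) ∧ ∑ x ∈ R, c x ≤ k := by
  have hcompl (S' : Finset s) :
      Subtype.val '' ({y | y ∈ S'}ᶜ : Set s) = s \ ↑(S'.map (Function.Embedding.subtype _)) := by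
    ext x
    simp
  constructor
  · rintro ⟨S', hS', hc⟩
    refine ⟨S'.map (Function.Embedding.subtype _), ?_, ?_, ?_⟩
    · intro x hx
      obtain ⟨y, -, rfl⟩ := Finset.mem_map.1 hx
      exact y.2
    · rwa [← hcompl, ← isTwoClubCluster_induce_induce_iff]
    · rwa [Finset.sum_map]
  · rintro ⟨R, hRs, hR, hc⟩
    classical
    have hR : (R.subtype (· ∈ s)).map (Function.Embedding.subtype _) = R := by
      rw [Finset.subtype_map, Finset.filter_true_of_mem fun x hx => hRs hx]
    refine ⟨R.subtype (· ∈ s), ?_, ?_⟩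
    · rwa [isTwoClubCluster_induce_induce_iff, hcompl, hR]
    · rwa [← hR, Finset.sum_map] at hc

variable [DecidableEq V] {u v : V}

theorem AreTwins.isTwoClubCluster_compl_erase (htw : AreTwins G u v) {S : Finset V} (hu : u ∉ S)
    (hv : v ∈ S) (h : IsTwoClubCluster (G.induce (↑S)ᶜ)) :
    IsTwoClubCluster (G.induce (↑(S.erase v))ᶜ) := by
  have hset : (↑(S.erase v) : Set V)ᶜ = insert v (↑S)ᶜ := by
    ext x
    by_cases hx : x = v <;> simp [hx]
  rw [hset]
  exact (htw.isTwoClubCluster_induce_insert_iff (by simpa) (by simpa)).2 h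

theorem AreTwins.exists_subset_twinClosed (htw : AreTwins G u v) {S : Finset V}
    (h : IsTwoClubCluster (G.induce (↑S)ᶜ)) :
    ∃ T ⊆ S, (u ∈ T ↔ v ∈ T) ∧ IsTwoClubCluster (G.induce (↑T)ᶜ) := by
  by_cases hu : u ∈ S <;> by_cases hv : v ∈ S
  · exact ⟨S, subset_rfl, iff_of_true hu hv, h⟩
  · exact ⟨S.erase u, S.erase_subset u, by simp [hv], htw.symm.isTwoClubCluster_compl_erase hv hu h⟩
  · exact ⟨S.erase v, S.erase_subset v, by simp [hu], htw.isTwoClubCluster_compl_erase hu hv h⟩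
  · exact ⟨S, subset_rfl, iff_of_false hu hv, h⟩

theorem AreTwins.isTwoClubCluster_compl_iff (htw : AreTwins G u v) (huv : u ≠ v) {T : Finset V}
    (hT : u ∈ T ↔ v ∈ T) :
    IsTwoClubCluster (G.induce (↑T)ᶜ) ↔
      IsTwoClubCluster (G.induce ({x | x ≠ v} \ ↑(T.erase v))) := by
  by_cases hv : v ∈ T
  · have hset : ({x | x ≠ v} \ ↑(T.erase v) : Set V) = (↑T)ᶜ := by
      ext x
      by_cases hx : x = v <;> simp [hx, hv]
    rw [hset]
  · have hset : (↑T : Set V)ᶜ = insert v ({x | x ≠ v} \ ↑(T.erase v)) := by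
      ext x
      by_cases hx : x = v <;> simp [hx, hv]
    rw [hset]
    exact htw.isTwoClubCluster_induce_insert_iff (by simp [huv, hT.not.2 hv]) (by simp)

theorem Finset.sum_ite_self_add (w : V → ℕ) (a : ℕ) (R : Finset V) :
    ∑ x ∈ R, (if x = u then w u + a else w x) = ∑ x ∈ R, w x + if u ∈ R then a else 0 := by
  rw [← Finset.sum_ite_eq' R u (fun _ => a), ← Finset.sum_add_distrib]
  refine Finset.sum_congr rfl fun x _ => ?_
  split_ifs with h <;> simp [h]

theorem sum_erase_ite_eq (huv : u ≠ v) (w : V → ℕ) {T : Finset V} (hT : u ∈ T ↔ v ∈ T) :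
    ∑ x ∈ T.erase v, (if x = u then w u + w v else w x) = ∑ x ∈ T, w x := by
  rw [Finset.sum_ite_self_add]
  by_cases hv : v ∈ T
  · rw [if_pos (Finset.mem_erase.2 ⟨huv, hT.2 hv⟩), Finset.sum_erase_add T w hv]
  · rw [if_neg (fun h => hv (hT.1 (Finset.mem_of_mem_erase h))), Finset.erase_eq_of_notMem hv,
      add_zero]

theorem exists_twinClosed_erase_eq {R : Finset V} (hv : v ∉ R) :
    ∃ T : Finset V, (u ∈ T ↔ v ∈ T) ∧ T.erase v = R := by
  by_cases hu : u ∈ R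
  · exact ⟨insert v R, by simp [hu], Finset.erase_insert hv⟩
  · exact ⟨R, iff_of_false hu hv, Finset.erase_eq_of_notMem hv⟩

theorem AreTwins.exists_compl_iff_exists_twinClosed (htw : AreTwins G u v) (w : V → ℕ) (k : ℕ) :
    (∃ S : Finset V, IsTwoClubCluster (G.induce (↑S)ᶜ) ∧ ∑ x ∈ S, w x ≤ k) ↔
    ∃ T : Finset V, (u ∈ T ↔ v ∈ T) ∧ IsTwoClubCluster (G.induce (↑T)ᶜ) ∧ ∑ x ∈ T, w x ≤ k := by
  constructor
  · rintro ⟨S, hS, hw⟩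
    obtain ⟨T, hTS, hT, hG⟩ := htw.exists_subset_twinClosed hS
    exact ⟨T, hT, hG, (Finset.sum_le_sum_of_subset hTS).trans hw⟩
  · rintro ⟨T, -, hG, hw⟩
    exact ⟨T, hG, hw⟩

theorem AreTwins.exists_twinClosed_iff (htw : AreTwins G u v) (huv : u ≠ v) (w : V → ℕ) (k : ℕ) :
    (∃ T : Finset V, (u ∈ T ↔ v ∈ T) ∧ IsTwoClubCluster (G.induce (↑T)ᶜ) ∧ ∑ x ∈ T, w x ≤ k) ↔
    ∃ R : Finset V, ↑R ⊆ {x | x ≠ v} ∧ IsTwoClubCluster (G.induce ({x | x ≠ v} \ ↑R)) ∧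
      ∑ x ∈ R, (if x = u then w u + w v else w x) ≤ k := by
  constructor
  · rintro ⟨T, hT, hG, hw⟩
    exact ⟨T.erase v, fun x hx => Finset.ne_of_mem_erase hx,
      (htw.isTwoClubCluster_compl_iff huv hT).1 hG, (sum_erase_ite_eq huv w hT).symm ▸ hw⟩
  · rintro ⟨R, hRv, hG, hw⟩
    obtain ⟨T, hT, rfl⟩ := exists_twinClosed_erase_eq (u := u) fun h => hRv h rfl
    exact ⟨T, hT, (htw.isTwoClubCluster_compl_iff huv hT).2 hG, sum_erase_ite_eq huv w hT ▸ hw⟩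

end Solutions

theorem stmt8_general {V : Type*} [DecidableEq V] (G : SimpleGraph V) (k : ℕ)
    (w : V → ℕ) (u v : V) (huv : u ≠ v)
    (htwin : (({u} : Set V) ∪ G.neighborSet u = ({v} : Set V) ∪ G.neighborSet v) ∨
      G.neighborSet u = G.neighborSet v) :
    (∃ S : Finset V, IsTwoClubCluster (G.induce ((↑S : Set V)ᶜ)) ∧ ∑ x ∈ S, w x ≤ k) ↔
    (∃ S' : Finset {x : V // x ≠ v},
      IsTwoClubCluster ((G.induce {x : V | x ≠ v}).induce ({y | y ∈ S'}ᶜ)) ∧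
      ∑ x ∈ S', (if (x : V) = u then w u + w v else w (x : V)) ≤ k) := by
  have htw := areTwins_of_closedNbhd_eq_or_neighborSet_eq htwin
  exact (htw.exists_compl_iff_exists_twinClosed w k).trans <|
    (htw.exists_twinClosed_iff huv w k).trans (exists_finset_subtype_isTwoClubCluster_iff _ _ k).symm

theorem stmt8 {V : Type*} [Fintype V] [DecidableEq V] (G : SimpleGraph V) (k : ℕ)
    (w : V → ℕ) (hw : ∀ x, 1 ≤ w x) (u v : V) (huv : u ≠ v)
    (htwin : (({u} : Set V) ∪ G.neighborSet u = ({v} : Set V) ∪ G.neighborSet v) ∨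
      G.neighborSet u = G.neighborSet v) :
    (∃ S : Finset V, IsTwoClubCluster (G.induce ((↑S : Set V)ᶜ)) ∧ ∑ x ∈ S, w x ≤ k) ↔
    (∃ S' : Finset {x : V // x ≠ v},
      IsTwoClubCluster ((G.induce {x : V | x ≠ v}).induce ({y | y ∈ S'}ᶜ)) ∧
      ∑ x ∈ S', (if (x : V) = u then w u + w v else w (x : V)) ≤ k) :=
  stmt8_general G k w u v huv htwin
end

section
/- Let v be a cut vertex of a connected graph G that is not a bridge vertex (i.e., there exist no vertices s,v' ∈ N(v) that are the endpoints of an induced P4 in G). Let C be a connected component of G−v such that G[C] is a 2-club, and suppose all vertex weights in C are at least w(v). Then for every 2-club vertex deletion set S of G with S ∩ C ≠ ∅ and v ∉ S, the set S' = (S ∖ C) ∪ {v} is also a 2-club vertex deletion set with w(S') ≤ w(S). -/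
/-! A graph is a 2-club cluster as soon as the two ends of every induced P4 have a common
neighbour. Removing `v` cuts `C` off from the rest, so an induced P4 of `G - S'` lies either
inside the 2-club `C`, or inside `G - S`, where its ends have a common neighbour because
`G - S` is a 2-club cluster; that neighbour survives in `G - S'` since it is not in `S` and,
`v` not being a bridge vertex, it is not `v`. The weight bound holds because `v` is no heavier
than a vertex of `S ∩ C`. -/

open SimpleGraph

/-- An induced P4: a path s-t-u-v on four distinct vertices with no chords. -/
def IsInducedP4 {V : Type*} (G : SimpleGraph V) (s t u v : V) : Prop :=
  s ≠ t ∧ s ≠ u ∧ s ≠ v ∧ t ≠ u ∧ t ≠ v ∧ u ≠ v ∧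
  G.Adj s t ∧ G.Adj t u ∧ G.Adj u v ∧ ¬ G.Adj s u ∧ ¬ G.Adj s v ∧ ¬ G.Adj t v

namespace SimpleGraph

variable {V W : Type*} {G : SimpleGraph V} {H : SimpleGraph W}

lemma dist_le_two_of_adj_of_adj {x y z : W} (hxz : H.Adj x z) (hzy : H.Adj z y) :
    H.dist x y ≤ 2 :=
  dist_le (.cons hxz (.cons hzy .nil))

lemma Reachable.exists_dist_eq_of_le {x y : W} (hr : H.Reachable x y) {n : ℕ}
    (hn : n ≤ H.dist x y) : ∃ z, H.dist x z = n := by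
  obtain ⟨p, hp⟩ := hr.exists_walk_length_eq_dist
  refine ⟨p.getVert n, ?_⟩
  rw [← length_eq_dist_of_subwalk hp (p.isSubwalk_take n), Walk.take_length]
  omega

lemma exists_isInducedP4_of_dist_eq_three {x y : W} (h : H.dist x y = 3) :
    ∃ t u, IsInducedP4 H x t u y := by
  have hr : H.Reachable x y := Reachable.of_dist_ne_zero (by omega)
  obtain ⟨p, hp⟩ := hr.exists_walk_length_eq_dist
  rw [h] at hp
  have hxy : ¬ H.Adj x y := fun hxy => by simp [dist_eq_one_iff_adj.mpr hxy] at h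
  have hnot : ∀ z, H.Adj x z → ¬ H.Adj z y := fun z hxz hzy => by
    have := dist_le_two_of_adj_of_adj hxz hzy; omega
  have hxt : H.Adj x (p.getVert 1) := by
    simpa using p.adj_getVert_succ (i := 0) (by omega)
  have htu : H.Adj (p.getVert 1) (p.getVert 2) := p.adj_getVert_succ (by omega)
  have huy : H.Adj (p.getVert 2) y := by
    simpa [p.getVert_of_length_le hp.le] using p.adj_getVert_succ (i := 2) (by omega)
  exact ⟨_, _, hxt.ne, fun e => hxy (e ▸ huy), fun e => by simp [e] at h, htu.ne,
    fun e => hxy (e ▸ hxt), huy.ne, hxt, htu, huy, fun hxu => hnot _ hxu huy, hxy, hnot _ hxt⟩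

lemma IsInducedP4.map {a b c d : W} (f : H ↪g G) (h : IsInducedP4 H a b c d) :
    IsInducedP4 G (f a) (f b) (f c) (f d) := by
  obtain ⟨hab, hac, had, hbc, hbd, hcd, hab', hbc', hcd', hac', had', hbd'⟩ := h
  simp only [IsInducedP4, ne_eq, f.injective.eq_iff, f.map_adj_iff]
  exact ⟨hab, hac, had, hbc, hbd, hcd, hab', hbc', hcd', hac', had', hbd'⟩

lemma isTwoClubCluster_of_forall_isInducedP4
    (h : ∀ x t u y, IsInducedP4 H x t u y → ∃ z, H.Adj x z ∧ H.Adj z y) :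
    IsTwoClubCluster H := by
  intro x y hr
  by_contra! hlt
  obtain ⟨y', hy'⟩ := hr.exists_dist_eq_of_le (n := 3) hlt
  obtain ⟨t, u, hP⟩ := exists_isInducedP4_of_dist_eq_three hy'
  obtain ⟨z, hxz, hzy⟩ := h x t u y' hP
  have := dist_le_two_of_adj_of_adj hxz hzy
  omega

lemma IsTwoClubCluster.exists_adj_adj {x y : W} (h : IsTwoClubCluster H) (hr : H.Reachable x y)
    (hne : x ≠ y) (hxy : ¬ H.Adj x y) : ∃ z, H.Adj x z ∧ H.Adj z y := by
  have h2 : H.dist x y = 2 := by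
    have := hr.one_lt_dist_of_ne_of_not_adj hne hxy
    have := h x y hr
    omega
  obtain ⟨z, hz⟩ := (edist_eq_two_iff.mp (by rw [← hr.coe_dist_eq_edist, h2]; rfl)).2.2
  exact ⟨z, hz.1, hz.2.symm⟩

lemma IsTwoClub.exists_adj_adj_of_induce {C : Set V} (h : IsTwoClub (G.induce C)) {x y : V}
    (hx : x ∈ C) (hy : y ∈ C) (hne : x ≠ y) (hxy : ¬ G.Adj x y) :
    ∃ z ∈ C, G.Adj x z ∧ G.Adj z y := by
  obtain hxy' | ⟨z, hxz, hyz⟩ := h ⟨x, hx⟩ ⟨y, hy⟩ (by simpa using hne)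
  · exact absurd hxy' hxy
  · exact ⟨z, z.2, hxz, hyz.symm⟩

def IsBridgeVertex (G : SimpleGraph V) (b : V) : Prop :=
  ∃ s x t u, G.Adj b s ∧ G.Adj b x ∧ IsInducedP4 G s t u x

lemma IsInducedP4.exists_adj_adj_ne_of_not_isBridgeVertex {B : Set V}
    (hB : IsTwoClubCluster (G.induce B)) {v x t u y : V} (hv : ¬ IsBridgeVertex G v)
    (hP : IsInducedP4 G x t u y) (hx : x ∈ B) (ht : t ∈ B) (hu : u ∈ B) (hy : y ∈ B) :
    ∃ z ∈ B, z ≠ v ∧ G.Adj x z ∧ G.Adj z y := by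
  have ⟨_, _, hne, _, _, _, hxt, htu, huy, _, hxy, _⟩ := hP
  have hr : (G.induce B).Reachable ⟨x, hx⟩ ⟨y, hy⟩ :=
    (show (G.induce B).Adj ⟨x, hx⟩ ⟨t, ht⟩ from hxt).reachable.trans <|
      (show (G.induce B).Adj ⟨t, ht⟩ ⟨u, hu⟩ from htu).reachable.trans <|
        (show (G.induce B).Adj ⟨u, hu⟩ ⟨y, hy⟩ from huy).reachable
  obtain ⟨z, hxz, hzy⟩ := hB.exists_adj_adj hr (by simpa using hne) hxy
  refine ⟨z, z.2, ?_, hxz, hzy⟩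
  rintro rfl
  exact hv ⟨x, y, t, u, hxz.symm, hzy, hP⟩

lemma mem_iff_mem_of_adj {C : Set V} {v a b : V} (hC : ∀ a ∈ C, ∀ b, G.Adj a b → b = v ∨ b ∈ C)
    (ha : a ≠ v) (hb : b ≠ v) (hab : G.Adj a b) : a ∈ C ↔ b ∈ C :=
  ⟨fun h => (hC a h b hab).resolve_left hb, fun h => (hC b h a hab.symm).resolve_left ha⟩

end SimpleGraph

lemma Finset.sum_insert_sdiff_le {ι M : Type*} [DecidableEq ι] [AddCommMonoid M] [PartialOrder M]
    [IsOrderedAddMonoid M] [CanonicallyOrderedAdd M] {S C : Finset ι} {w : ι → M} {v : ι}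
    (hvS : v ∉ S) (hSC : (S ∩ C).Nonempty) (hw : ∀ c ∈ C, w v ≤ w c) :
    ∑ x ∈ insert v (S \ C), w x ≤ ∑ x ∈ S, w x := by
  obtain ⟨c, hc⟩ := hSC
  rw [sum_insert fun h => hvS (mem_sdiff.1 h).1, ← sum_inter_add_sum_sdiff S C w]
  gcongr
  exact (hw c (mem_inter.1 hc).2).trans (single_le_sum (fun _ _ => zero_le) hc)

theorem stmt11_general {V : Type*} [DecidableEq V] (G : SimpleGraph V)
    (w : V → ℕ) (v : V)
    (hnotbridge : ¬ ∃ s x t u : V, G.Adj v s ∧ G.Adj v x ∧ IsInducedP4 G s t u x)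
    (C : Finset V) (hvC : v ∉ C)
    (hclosed : ∀ a ∈ C, ∀ b : V, G.Adj a b → b = v ∨ b ∈ C)
    (h2club : IsTwoClub (G.induce (↑C : Set V)))
    (hwC : ∀ c ∈ C, w v ≤ w c)
    (S : Finset V) (hS : IsTwoClubCluster (G.induce ((↑S : Set V)ᶜ)))
    (hSC : (S ∩ C).Nonempty) (hvS : v ∉ S) :
    IsTwoClubCluster (G.induce ((↑(insert v (S \ C)) : Set V)ᶜ)) ∧
    ∑ x ∈ insert v (S \ C), w x ≤ ∑ x ∈ S, w x := by
  set T : Set V := (↑(insert v (S \ C)) : Set V)ᶜ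
  have hT (a : V) : a ∈ T ↔ a ≠ v ∧ (a ∈ S → a ∈ C) := by
    simp [T, not_or]
  refine ⟨isTwoClubCluster_of_forall_isInducedP4 fun x t u y hP => ?_,
    Finset.sum_insert_sdiff_le hvS hSC hwC⟩
  have hPG := hP.map (Embedding.induce T)
  have ⟨_, _, hne, _, _, _, hxt, htu, huy, _, hxy, _⟩ := hPG
  have hsame {a b : T} (hab : G.Adj a b) : (a : V) ∈ C ↔ (b : V) ∈ C :=
    mem_iff_mem_of_adj (C := C) hclosed ((hT a).1 a.2).1 ((hT b).1 b.2).1 hab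
  obtain ⟨z, hzT, hxz, hzy⟩ : ∃ z ∈ T, G.Adj x z ∧ G.Adj z y := by
    by_cases hx : (x : V) ∈ C
    · have hy : (y : V) ∈ C := (hsame huy).1 ((hsame htu).1 ((hsame hxt).1 hx))
      obtain ⟨z, hzC, hxz, hzy⟩ := h2club.exists_adj_adj_of_induce hx hy hne hxy
      exact ⟨z, (hT z).2 ⟨fun h => hvC (h ▸ hzC), fun _ => hzC⟩, hxz, hzy⟩
    · have hout {a : T} (ha : (a : V) ∉ C) : (a : V) ∈ (↑S : Set V)ᶜ :=
        fun haS => ha (((hT a).1 a.2).2 haS)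
      have ht : (t : V) ∉ C := (hsame hxt).not.1 hx
      have hu : (u : V) ∉ C := (hsame htu).not.1 ht
      obtain ⟨z, hzS, hzv, hxz, hzy⟩ := hPG.exists_adj_adj_ne_of_not_isBridgeVertex hS hnotbridge
        (hout hx) (hout ht) (hout hu) (hout ((hsame huy).not.1 hu))
      exact ⟨z, (hT z).2 ⟨hzv, fun h => absurd h hzS⟩, hxz, hzy⟩
  exact ⟨⟨z, hzT⟩, hxz, hzy⟩

theorem stmt11 {V : Type*} [Fintype V] [DecidableEq V] (G : SimpleGraph V)
    (hG : G.Connected)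
    (w : V → ℕ) (hw : ∀ x, 1 ≤ w x) (v : V)
    (hcut : ¬ (G.induce {x : V | x ≠ v}).Preconnected)
    (hnotbridge : ¬ ∃ s x t u : V, G.Adj v s ∧ G.Adj v x ∧ IsInducedP4 G s t u x)
    (C : Finset V) (hvC : v ∉ C)
    (hconn : (G.induce (↑C : Set V)).Connected)
    (hclosed : ∀ a ∈ C, ∀ b : V, G.Adj a b → b = v ∨ b ∈ C)
    (h2club : IsTwoClub (G.induce (↑C : Set V)))
    (hwC : ∀ c ∈ C, w v ≤ w c)
    (S : Finset V) (hS : IsTwoClubCluster (G.induce ((↑S : Set V)ᶜ)))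
    (hSC : (S ∩ C).Nonempty) (hvS : v ∉ S) :
    IsTwoClubCluster (G.induce ((↑(insert v (S \ C)) : Set V)ᶜ)) ∧
    ∑ x ∈ insert v (S \ C), w x ≤ ∑ x ∈ S, w x :=
  stmt11_general G w v hnotbridge C hvC hclosed h2club hwC S hS hSC hvS
end

section
/- Consider the selection gadget: two stars with k+1 leaves each, whose center vertices c_L and c_R are joined by an edge. Any vertex deletion set S of size at most k such that every component of the remaining graph has diameter at most 2 must contain c_L or c_R. -/
/-
If neither centre is deleted, then, as `S` has fewer than `k + 1` vertices, some leaf `l ∈ L` and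
some leaf `r ∈ R` survive. In `G - S` the path `l - cL - cR - r` connects them, yet `l` and `r`
are pendant vertices with distinct neighbours, so they are at distance 3.
-/

open SimpleGraph

namespace SimpleGraph

theorem Reachable.adj_or_exists_adj_adj_of_dist_le_two {V : Type*} {G : SimpleGraph V}
    {u v : V} (hr : G.Reachable u v) (huv : u ≠ v) (h : G.dist u v ≤ 2) :
    G.Adj u v ∨ ∃ w, G.Adj u w ∧ G.Adj w v := by
  obtain ⟨p, hp⟩ := hr.exists_walk_length_eq_dist
  rcases p with _ | ⟨h₁, _ | ⟨h₂, _ | ⟨_, p⟩⟩⟩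
  · exact absurd rfl huv
  · exact .inl h₁
  · exact .inr ⟨_, h₁, h₂⟩
  · simp only [Walk.length_cons] at hp
    omega

end SimpleGraph

theorem IsTwoClubCluster.false_of_pendant_path {W : Type*} {H : SimpleGraph W}
    (hH : IsTwoClubCluster H) {a b c d : W} (hab : H.Adj a b) (hbc : H.Adj b c) (hcd : H.Adj c d)
    (hac : a ≠ c) (ha : ∀ x, H.Adj a x → x = b) (hd : ∀ x, H.Adj x d → x = c) : False := by
  have had : a ≠ d := by
    rintro rfl
    exact hbc.ne (hd b hab.symm)
  have hreach : H.Reachable a d := ⟨.cons hab (.cons hbc (.cons hcd .nil))⟩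
  rcases hreach.adj_or_exists_adj_adj_of_dist_le_two had (hH a d hreach) with hadj | ⟨w, haw, hwd⟩
  · exact hac (hd a hadj)
  · exact hbc.ne ((ha w haw).symm.trans (hd w hwd))

def IsSelectionGadget {V : Type*} (G : SimpleGraph V) (cL cR : V) (L R : Finset V) : Prop :=
  ∀ x y : V, G.Adj x y ↔
    ((x = cL ∧ y = cR) ∨ (x = cR ∧ y = cL) ∨
     (x = cL ∧ y ∈ L) ∨ (y = cL ∧ x ∈ L) ∨
     (x = cR ∧ y ∈ R) ∨ (y = cR ∧ x ∈ R))

section SelectionGadget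

variable {V : Type*} {G : SimpleGraph V} {cL cR : V} {L R : Finset V}

theorem IsSelectionGadget.swap (hG : IsSelectionGadget G cL cR L R) :
    IsSelectionGadget G cR cL R L :=
  fun x y => (hG x y).trans (by tauto)

theorem IsSelectionGadget.adj_centers (hG : IsSelectionGadget G cL cR L R) : G.Adj cL cR :=
  (hG cL cR).2 (by tauto)

theorem IsSelectionGadget.adj_of_mem_left (hG : IsSelectionGadget G cL cR L R) {l : V}
    (hl : l ∈ L) : G.Adj l cL :=
  (hG l cL).2 (by tauto)

theorem IsSelectionGadget.eq_of_adj_of_mem_left (hG : IsSelectionGadget G cL cR L R)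
    (hcL : cL ∉ L) (hcR : cR ∉ L) (hLR : Disjoint L R) {l z : V} (hl : l ∈ L) (h : G.Adj l z) :
    z = cL := by
  have hlR : l ∉ R := Finset.disjoint_left.mp hLR hl
  rw [hG] at h
  rcases h with ⟨rfl, -⟩ | ⟨rfl, -⟩ | ⟨rfl, -⟩ | ⟨rfl, -⟩ | ⟨rfl, -⟩ | ⟨-, hl'⟩ <;> trivial

end SelectionGadget

theorem stmt12_general {V : Type*} (G : SimpleGraph V) (k : ℕ)
    (cL cR : V) (L R : Finset V)
    (hL : L.card = k + 1) (hR : R.card = k + 1)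
    (hcL : cL ∉ L ∧ cL ∉ R) (hcR : cR ∉ L ∧ cR ∉ R)
    (hdisj : Disjoint L R)
    (hadj : ∀ x y : V, G.Adj x y ↔
      ((x = cL ∧ y = cR) ∨ (x = cR ∧ y = cL) ∨
       (x = cL ∧ y ∈ L) ∨ (y = cL ∧ x ∈ L) ∨
       (x = cR ∧ y ∈ R) ∨ (y = cR ∧ x ∈ R)))
    (S : Finset V) (hcard : S.card ≤ k)
    (hS : IsTwoClubCluster (G.induce ((↑S : Set V)ᶜ))) :
    cL ∈ S ∨ cR ∈ S := by
  by_contra! hcS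
  have hG : IsSelectionGadget G cL cR L R := hadj
  obtain ⟨l, hlL, hlS⟩ := Finset.exists_mem_notMem_of_card_lt_card (s := S) (t := L) (by omega)
  obtain ⟨r, hrR, hrS⟩ := Finset.exists_mem_notMem_of_card_lt_card (s := S) (t := R) (by omega)
  refine hS.false_of_pendant_path (a := ⟨l, hlS⟩) (b := ⟨cL, hcS.1⟩) (c := ⟨cR, hcS.2⟩)
    (d := ⟨r, hrS⟩) (hG.adj_of_mem_left hlL) hG.adj_centers (hG.swap.adj_of_mem_left hrR).symm
    ?_ ?_ ?_
  · exact fun h => hcR.1 (Subtype.mk.inj h ▸ hlL)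
  · exact fun x hx => Subtype.ext (hG.eq_of_adj_of_mem_left hcL.1 hcR.1 hdisj hlL hx)
  · exact fun x hx => Subtype.ext
      (hG.swap.eq_of_adj_of_mem_left hcR.2 hcL.2 hdisj.symm hrR hx.symm)

theorem stmt12 {V : Type*} [Fintype V] [DecidableEq V] (G : SimpleGraph V) (k : ℕ)
    (cL cR : V) (L R : Finset V)
    (hL : L.card = k + 1) (hR : R.card = k + 1)
    (hcL : cL ∉ L ∧ cL ∉ R) (hcR : cR ∉ L ∧ cR ∉ R) (hLR : cL ≠ cR)
    (hdisj : Disjoint L R)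
    (hadj : ∀ x y : V, G.Adj x y ↔
      ((x = cL ∧ y = cR) ∨ (x = cR ∧ y = cL) ∨
       (x = cL ∧ y ∈ L) ∨ (y = cL ∧ x ∈ L) ∨
       (x = cR ∧ y ∈ R) ∨ (y = cR ∧ x ∈ R)))
    (S : Finset V) (hcard : S.card ≤ k)
    (hS : IsTwoClubCluster (G.induce ((↑S : Set V)ᶜ))) :
    cL ∈ S ∨ cR ∈ S :=
  stmt12_general G k cL cR L R hL hR hcL hcR hdisj hadj S hcard hS
end

section
/- If C is a connected component of G that induces a 2-club, then S ⊆ V(G) is a minimum 2-club vertex deletion set of G if and only if S ∩ C = ∅ and S is a minimum 2-club vertex deletion set of G − C. In particular, (G,k) is a yes-instance of 2-Club Cluster Vertex Deletion if and only if (G−C, k) is. -/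
open SimpleGraph

/-! Walks in an induced subgraph `G[A]` never cross between a connected component `C` and its
complement, so `G[A]` is a 2-club cluster iff `G[A ∩ C]` and `G[A \ C]` both are. If `C` is a
2-club, this makes `G - (S \ C)` a 2-club cluster whenever `G - S` is one, and `S \ C` is
strictly smaller than `S` unless `S ∩ C = ∅`. So minimum solutions, and solutions of size at most
`k`, may be taken disjoint from `C`, and for those `G - S` and `(G - C) - S` are 2-club clusters
together. -/

namespace SimpleGraph

variable {V W : Type*} {G : SimpleGraph V} {H : SimpleGraph W}

lemma Hom.dist_le (f : G →g H) {u v : V} (h : G.Reachable u v) :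
    H.dist (f u) (f v) ≤ G.dist u v := by
  obtain ⟨w, hw⟩ := h.exists_walk_length_eq_dist
  simpa [hw] using SimpleGraph.dist_le (w.map f)

lemma Iso.dist_eq (φ : G ≃g H) (u v : V) : H.dist (φ u) (φ v) = G.dist u v := by
  by_cases h : G.Reachable u v
  · refine le_antisymm (Hom.dist_le φ.toHom h) ?_
    simpa using Hom.dist_le φ.symm.toHom (h.map φ.toHom)
  · rw [dist_eq_zero_of_not_reachable h,
      dist_eq_zero_of_not_reachable (mt Iso.reachable_iff.mp h)]

lemma Iso.isTwoClubCluster_iff (φ : G ≃g H) : IsTwoClubCluster G ↔ IsTwoClubCluster H := by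
  refine ⟨fun h x y hxy => ?_, fun h x y hxy => ?_⟩
  · rw [← φ.apply_symm_apply x, ← φ.apply_symm_apply y, φ.dist_eq]
    exact h _ _ (by simpa using hxy.map φ.symm.toHom)
  · rw [← φ.dist_eq]
    exact h _ _ (hxy.map φ.toHom)

lemma IsTwoClub.isTwoClubCluster (h : IsTwoClub G) : IsTwoClubCluster G := by
  intro x y _
  obtain rfl | hne := eq_or_ne x y
  · simp
  rcases h x y hne with hxy | ⟨z, hxz, hyz⟩
  · simp [dist_eq_one_iff_adj.mpr hxy]
  · exact dist_le (.cons hxz (.cons hyz.symm .nil))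

def induceInduceIso (D A : Set V) :
    (G.induce D).induce {x | ↑x ∈ A} ≃g G.induce (A ∩ D) where
  toFun x := ⟨x.1.1, x.2, x.1.2⟩
  invFun y := ⟨⟨y.1, y.2.2⟩, y.2.1⟩
  left_inv _ := rfl
  right_inv _ := rfl
  map_rel_iff' := Iff.rfl

section AdjClosed

variable {B : Set V} (hB : ∀ ⦃v w⦄, G.Adj v w → (v ∈ B ↔ w ∈ B))
include hB

lemma Reachable.mem_iff_of_adj {u v : V} (h : G.Reachable u v) : u ∈ B ↔ v ∈ B := by
  obtain ⟨w⟩ := h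
  induction w with
  | nil => rfl
  | cons ha _ ih => exact (hB ha).trans ih

variable {A : Set V}

lemma exists_walk_induce_inter {x y : A} (hx : ↑x ∈ B) (h : (G.induce A).Reachable x y) :
    ∃ (hy : ↑y ∈ B)
      (w : (G.induce (A ∩ B)).Walk ⟨x, Set.mem_inter x.2 hx⟩ ⟨y, Set.mem_inter y.2 hy⟩),
      w.length = (G.induce A).dist x y := by
  classical
  obtain ⟨w, hw⟩ := h.exists_walk_length_eq_dist
  let w' := w.map (Embedding.induce A).toHom
  have hsupp : ∀ a ∈ w'.support, a ∈ A ∩ B := by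
    intro a ha
    refine ⟨?_, (Reachable.mem_iff_of_adj hB ⟨w'.takeUntil a ha⟩).mp hx⟩
    rw [Walk.support_map, List.mem_map] at ha
    obtain ⟨b, -, rfl⟩ := ha
    exact b.2
  refine ⟨(Reachable.mem_iff_of_adj hB ⟨w'⟩).mp hx, w'.induce _ hsupp, ?_⟩
  have := congrArg Walk.length (w'.map_induce hsupp)
  rw [Walk.length_map] at this
  exact this.trans ((w.length_map _).trans hw)

lemma isTwoClubCluster_induce_inter_iff :
    IsTwoClubCluster (G.induce (A ∩ B)) ↔
      ∀ x y : A, ↑x ∈ B → (G.induce A).Reachable x y → (G.induce A).dist x y ≤ 2 := by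
  let ι := G.induceHomOfLE (Set.inter_subset_left : A ∩ B ⊆ A)
  refine ⟨fun h x y hx hxy => ?_, fun h x y hxy => ?_⟩
  · obtain ⟨_, w, -⟩ := exists_walk_induce_inter hB hx hxy
    exact (Hom.dist_le ι.toHom w.reachable).trans (h _ _ w.reachable)
  · have hxy' := hxy.map ι.toHom
    obtain ⟨_, w, hw⟩ := exists_walk_induce_inter hB (x := ι x) (y := ι y) x.2.2 hxy'
    exact (dist_le w).trans (hw.trans_le (h _ _ x.2.2 hxy'))

lemma isTwoClubCluster_induce_iff_inter_and_inter_compl :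
    IsTwoClubCluster (G.induce A) ↔
      IsTwoClubCluster (G.induce (A ∩ B)) ∧ IsTwoClubCluster (G.induce (A ∩ Bᶜ)) := by
  rw [isTwoClubCluster_induce_inter_iff hB,
    isTwoClubCluster_induce_inter_iff (B := Bᶜ) fun _ _ h => (hB h).not]
  refine ⟨fun h => ⟨fun x y _ => h x y, fun x y _ => h x y⟩, fun h x y => ?_⟩
  by_cases hx : ↑x ∈ B
  exacts [h.1 x y hx, h.2 x y hx]

end AdjClosed

lemma isTwoClubCluster_induce_iff_inter_compl_supp {c : G.ConnectedComponent}
    (h2 : IsTwoClub (G.induce c.supp)) {A : Set V} (hA : c.supp ⊆ A) :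
    IsTwoClubCluster (G.induce A) ↔ IsTwoClubCluster (G.induce (A ∩ c.suppᶜ)) := by
  rw [isTwoClubCluster_induce_iff_inter_and_inter_compl fun _ _ h => c.mem_supp_congr_adj h,
    Set.inter_eq_right.mpr hA]
  exact and_iff_right h2.isTwoClubCluster

end SimpleGraph

namespace Finset

variable {α : Type*} {s : Set α} [DecidablePred (· ∈ s)]

lemma coe_filter_notMem_inter_eq_empty (S : Finset α) :
    (↑(S.filter (· ∉ s)) : Set α) ∩ s = ∅ := by
  ext; simp

lemma card_filter_notMem_lt {S : Finset α} (h : (↑S : Set α) ∩ s ≠ ∅) :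
    #(S.filter (· ∉ s)) < #S := by
  obtain ⟨v, hvS, hvs⟩ := Set.nonempty_iff_ne_empty.mpr h
  exact card_lt_card ((filter_ssubset).mpr ⟨v, hvS, not_not.mpr hvs⟩)

variable {p q : Finset α → Prop} (hp : ∀ S, p S → p (S.filter (· ∉ s)))
  (hpq : ∀ S : Finset α, (↑S : Set α) ∩ s = ∅ → (p S ↔ q S))
include hp hpq

theorem minimum_card_iff_of_filter_notMem (S : Finset α) :
    (p S ∧ ∀ T, p T → #S ≤ #T) ↔
      ((↑S : Set α) ∩ s = ∅ ∧ q S ∧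
        ∀ T : Finset α, (↑T : Set α) ∩ s = ∅ → q T → #S ≤ #T) := by
  constructor
  · rintro ⟨hS, hmin⟩
    have hdisj : (↑S : Set α) ∩ s = ∅ := by
      by_contra h
      exact (card_filter_notMem_lt h).not_ge (hmin _ (hp S hS))
    exact ⟨hdisj, (hpq S hdisj).mp hS, fun T hT hqT => hmin T ((hpq T hT).mpr hqT)⟩
  · rintro ⟨hdisj, hS, hmin⟩
    refine ⟨(hpq S hdisj).mpr hS, fun T hT => ?_⟩
    have hT' := coe_filter_notMem_inter_eq_empty (s := s) T
    calc #S ≤ #(T.filter (· ∉ s)) := hmin _ hT' ((hpq _ hT').mp (hp T hT))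
      _ ≤ #T := card_filter_le _ _

theorem exists_card_le_iff_of_filter_notMem (k : ℕ) :
    (∃ S : Finset α, #S ≤ k ∧ p S) ↔
      ∃ S : Finset α, (↑S : Set α) ∩ s = ∅ ∧ #S ≤ k ∧ q S := by
  constructor
  · rintro ⟨S, hk, hS⟩
    have hS' := coe_filter_notMem_inter_eq_empty (s := s) S
    exact ⟨_, hS', (card_filter_le _ _).trans hk, (hpq _ hS').mp (hp S hS)⟩
  · rintro ⟨S, hdisj, hk, hS⟩
    exact ⟨S, hk, (hpq S hdisj).mpr hS⟩

end Finset

theorem stmt18_general {V : Type*} (G : SimpleGraph V)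
    (c : G.ConnectedComponent) (h2 : IsTwoClub (G.induce c.supp)) :
    (∀ S : Finset V,
      (IsTwoClubCluster (G.induce ((↑S : Set V)ᶜ)) ∧
        ∀ T : Finset V, IsTwoClubCluster (G.induce ((↑T : Set V)ᶜ)) → S.card ≤ T.card) ↔
      ((↑S : Set V) ∩ c.supp = ∅ ∧
        IsTwoClubCluster ((G.induce c.suppᶜ).induce ({x : ↥c.suppᶜ | ↑x ∈ S}ᶜ)) ∧
        ∀ T : Finset V, (↑T : Set V) ∩ c.supp = ∅ →
          IsTwoClubCluster ((G.induce c.suppᶜ).induce ({x : ↥c.suppᶜ | ↑x ∈ T}ᶜ)) →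
          S.card ≤ T.card)) ∧
    (∀ k : ℕ,
      (∃ S : Finset V, S.card ≤ k ∧ IsTwoClubCluster (G.induce ((↑S : Set V)ᶜ))) ↔
      (∃ S : Finset V, (↑S : Set V) ∩ c.supp = ∅ ∧ S.card ≤ k ∧
        IsTwoClubCluster ((G.induce c.suppᶜ).induce ({x : ↥c.suppᶜ | ↑x ∈ S}ᶜ)))) := by
  classical
  have hp (S : Finset V) (hS : IsTwoClubCluster (G.induce (↑S)ᶜ)) :
      IsTwoClubCluster (G.induce (↑(S.filter (· ∉ c.supp)))ᶜ) := by
    have hsupp : c.supp ⊆ (↑(S.filter (· ∉ c.supp)))ᶜ :=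
      fun _ hv hvS => (Finset.mem_filter.mp hvS).2 hv
    have hrest : (↑(S.filter (· ∉ c.supp)) : Set V)ᶜ ∩ c.suppᶜ = (↑S)ᶜ ∩ c.suppᶜ := by
      ext; simp; tauto
    rw [isTwoClubCluster_induce_iff_inter_compl_supp h2 hsupp, hrest]
    exact ((isTwoClubCluster_induce_iff_inter_and_inter_compl
      fun _ _ h => c.mem_supp_congr_adj h).mp hS).2
  have hpq (S : Finset V) (hS : (↑S : Set V) ∩ c.supp = ∅) :
      IsTwoClubCluster (G.induce (↑S)ᶜ) ↔
        IsTwoClubCluster ((G.induce c.suppᶜ).induce ({x : ↥c.suppᶜ | ↑x ∈ S}ᶜ)) := by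
    have hsupp : c.supp ⊆ (↑S)ᶜ :=
      Set.subset_compl_iff_disjoint_left.mpr (Set.disjoint_iff_inter_eq_empty.mpr hS)
    rw [isTwoClubCluster_induce_iff_inter_compl_supp h2 hsupp]
    exact (induceInduceIso _ _).isTwoClubCluster_iff.symm
  exact ⟨Finset.minimum_card_iff_of_filter_notMem hp hpq,
    Finset.exists_card_le_iff_of_filter_notMem hp hpq⟩

theorem stmt18 {V : Type*} [Fintype V] [DecidableEq V] (G : SimpleGraph V)
    (c : G.ConnectedComponent) (h2 : IsTwoClub (G.induce c.supp)) :
    (∀ S : Finset V,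
      (IsTwoClubCluster (G.induce ((↑S : Set V)ᶜ)) ∧
        ∀ T : Finset V, IsTwoClubCluster (G.induce ((↑T : Set V)ᶜ)) → S.card ≤ T.card) ↔
      ((↑S : Set V) ∩ c.supp = ∅ ∧
        IsTwoClubCluster ((G.induce c.suppᶜ).induce ({x : ↥c.suppᶜ | ↑x ∈ S}ᶜ)) ∧
        ∀ T : Finset V, (↑T : Set V) ∩ c.supp = ∅ →
          IsTwoClubCluster ((G.induce c.suppᶜ).induce ({x : ↥c.suppᶜ | ↑x ∈ T}ᶜ)) →
          S.card ≤ T.card)) ∧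
    (∀ k : ℕ,
      (∃ S : Finset V, S.card ≤ k ∧ IsTwoClubCluster (G.induce ((↑S : Set V)ᶜ))) ↔
      (∃ S : Finset V, (↑S : Set V) ∩ c.supp = ∅ ∧ S.card ≤ k ∧
        IsTwoClubCluster ((G.induce c.suppᶜ).induce ({x : ↥c.suppᶜ | ↑x ∈ S}ᶜ)))) :=
  stmt18_general G c h2
end
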